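/- Let J be an invertible Hermitian N×N matrix with κ negative eigenvalues, and let A be a diagonalizable J-selfadjoint matrix with real spectrum. For any open real interval Δ, let L_Δ be the sum of eigenspaces of A for eigenvalues in Δ. Then κ₋(L_Δ) ≤ κ and κ₋((L_Δ)^⊥ᴶ) = κ - κ₋(L_Δ), where κ₋(M) denotes the number of negative squares of [x,y]=(Jx,y) on the subspace M and ⊥ᴶ is the J-orthogonal complement. -/

import Mathlib

open Matrix

/-- `A` is diagonalizable. -/
def Diagonalizable {N : ℕ} (A : Matrix (Fin N) (Fin N) ℂ) : Prop :=
  ∃ P D : Matrix (Fin N) (Fin N) ℂ, IsUnit P.det ∧ D.IsDiag ∧ A = P * D * P⁻¹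

/-- The indefinite inner product `[x,y] = (Jx, y)` on `ℂᴺ`. -/
noncomputable def Jform {N : ℕ} (J : Matrix (Fin N) (Fin N) ℂ) (x y : Fin N → ℂ) : ℂ :=
  star (J *ᵥ x) ⬝ᵥ y

/-- Number of negative squares of `[·,·]` on the subspace `L`. -/
noncomputable def negSquares {N : ℕ} (J : Matrix (Fin N) (Fin N) ℂ)
    (L : Submodule ℂ (Fin N → ℂ)) : ℕ :=
  sSup {d : ℕ | ∃ W : Submodule ℂ (Fin N → ℂ), W ≤ L ∧ Module.finrank ℂ W = d ∧
    ∀ x ∈ W, x ≠ 0 → (Jform J x x).re < 0}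

/-- The `J`-orthogonal complement of a subspace `L`. -/
noncomputable def Jorth {N : ℕ} (J : Matrix (Fin N) (Fin N) ℂ) (L : Submodule ℂ (Fin N → ℂ)) :
    Submodule ℂ (Fin N → ℂ) where
  carrier := {y | ∀ x ∈ L, Jform J x y = 0}
  zero_mem' := by intro x hx; simp [Jform]
  add_mem' := by
    intro a b ha hb x hx
    have h1 := ha x hx
    have h2 := hb x hx
    simp only [Jform] at h1 h2
    simp [Jform, dotProduct_add, h1, h2]
  smul_mem' := by
    intro c y hy x hx
    have h := hy x hx
    simp only [Jform] at h
    simp [Jform, dotProduct_smul, h]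

/-- Sum of the eigenspaces of `A` for (real) eigenvalues in `Δ`. -/
noncomputable def eigSpan {N : ℕ} (A : Matrix (Fin N) (Fin N) ℂ) (Δ : Set ℝ) :
    Submodule ℂ (Fin N → ℂ) :=
  ⨆ μ ∈ Δ, Module.End.eigenspace (Matrix.toLin' A) (μ : ℂ)

/-!
Every subspace `M` splits as `W ⊔ W'` with `[·,·]` negative definite on `W` and nonnegative on
`W'` (split off one negative vector at a time), and then `κ₋(M) = dim W`, since a negative definite
subspace of `M` meets `W'` trivially. Hence `κ₋` is additive on `J`-orthogonal sums. Counting along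
the lines of an orthonormal eigenbasis of `J` gives `κ₋(ℂᴺ) = κ`. Eigenvectors of the
`J`-selfadjoint `A` for distinct real eigenvalues are `J`-orthogonal, and they span `ℂᴺ`, so
`ℂᴺ = L_Δ ⊔ L_Δ^⊥ᴶ` and `κ = κ₋(L_Δ) + κ₋(L_Δ^⊥ᴶ)`.
-/

open Module Module.End Submodule

variable {N : ℕ} {J A : Matrix (Fin N) (Fin N) ℂ} {L L' W W' : Submodule ℂ (Fin N → ℂ)}

@[simp]
lemma mem_Jorth {y : Fin N → ℂ} :
    y ∈ Jorth J L ↔ ∀ x ∈ L, Jform J x y = 0 :=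
  Iff.rfl

lemma Jorth_anti {L₁ L₂ : Submodule ℂ (Fin N → ℂ)} (h : L₁ ≤ L₂) : Jorth J L₂ ≤ Jorth J L₁ :=
  fun _ hy x hx => hy x (h hx)

lemma Jform_add_left (x y z : Fin N → ℂ) : Jform J (x + y) z = Jform J x z + Jform J y z := by
  simp [Jform, mulVec_add, add_dotProduct]

lemma Jform_add_right (x y z : Fin N → ℂ) : Jform J x (y + z) = Jform J x y + Jform J x z := by
  simp [Jform, dotProduct_add]

lemma Jform_smul_left (c : ℂ) (x y : Fin N → ℂ) :
    Jform J (c • x) y = starRingEnd ℂ c * Jform J x y := by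
  simp [Jform, mulVec_smul, star_smul, smul_dotProduct]

lemma Jform_smul_right (c : ℂ) (x y : Fin N → ℂ) : Jform J x (c • y) = c * Jform J x y := by
  simp [Jform, dotProduct_smul]

lemma Jform_sub_right (x y z : Fin N → ℂ) : Jform J x (y - z) = Jform J x y - Jform J x z := by
  simp [Jform, dotProduct_sub]

lemma Jform_zero_left (y : Fin N → ℂ) : Jform J 0 y = 0 := by
  simp [Jform]

lemma Jform_swap (hJ : J.IsHermitian) (x y : Fin N → ℂ) :
    Jform J y x = starRingEnd ℂ (Jform J x y) := by
  change _ = star (star (J *ᵥ x) ⬝ᵥ y)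
  rw [Jform, star_dotProduct, star_mulVec, hJ.eq, dotProduct_mulVec]

lemma re_Jform_smul_self (c : ℂ) (x : Fin N → ℂ) :
    (Jform J (c • x) (c • x)).re = Complex.normSq c * (Jform J x x).re := by
  rw [Jform_smul_left, Jform_smul_right, ← mul_assoc, mul_comm (starRingEnd ℂ c), Complex.mul_conj,
    Complex.re_ofReal_mul]

lemma mem_Jorth_span_singleton {x y : Fin N → ℂ} : y ∈ Jorth J (ℂ ∙ x) ↔ Jform J x y = 0 := by
  simp only [mem_Jorth, mem_span_singleton]
  refine ⟨fun h => h x ⟨1, one_smul ℂ x⟩, ?_⟩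
  rintro h _ ⟨c, rfl⟩
  rw [Jform_smul_left, h, mul_zero]

lemma Jform_add_self_of_mem_Jorth (hJ : J.IsHermitian) {x y : Fin N → ℂ} (hx : x ∈ L)
    (hy : y ∈ Jorth J L) :
    Jform J (x + y) (x + y) = Jform J x x + Jform J y y := by
  have hxy : Jform J x y = 0 := hy x hx
  have hyx : Jform J y x = 0 := by rw [Jform_swap hJ, hxy, map_zero]
  rw [Jform_add_left, Jform_add_right, Jform_add_right, hxy, hyx, add_zero, zero_add]

def NegDefOn (J : Matrix (Fin N) (Fin N) ℂ) (W : Submodule ℂ (Fin N → ℂ)) : Prop :=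
  ∀ x ∈ W, x ≠ 0 → (Jform J x x).re < 0

def NonnegOn (J : Matrix (Fin N) (Fin N) ℂ) (W : Submodule ℂ (Fin N → ℂ)) : Prop :=
  ∀ x ∈ W, 0 ≤ (Jform J x x).re

lemma negDefOn_bot : NegDefOn J ⊥ := fun _ hx hx0 => absurd ((mem_bot ℂ).mp hx) hx0

lemma NegDefOn.re_nonpos (h : NegDefOn J W) {x : Fin N → ℂ} (hx : x ∈ W) :
    (Jform J x x).re ≤ 0 := by
  rcases eq_or_ne x 0 with rfl | hx0
  · simp [Jform_zero_left]
  · exact (h x hx hx0).le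

lemma NegDefOn.disjoint_of_nonnegOn (h : NegDefOn J W) (h' : NonnegOn J W') : Disjoint W W' := by
  rw [disjoint_def]
  intro x hx hx'
  by_contra hx0
  exact (h x hx hx0).not_ge (h' x hx')

lemma negDefOn_span_singleton {x : Fin N → ℂ} (hx : (Jform J x x).re < 0) :
    NegDefOn J (ℂ ∙ x) := by
  rintro _ hy hy0
  obtain ⟨c, rfl⟩ := mem_span_singleton.mp hy
  have hc : c ≠ 0 := by rintro rfl; exact hy0 (zero_smul ℂ x)
  rw [re_Jform_smul_self]
  exact mul_neg_of_pos_of_neg (Complex.normSq_pos.mpr hc) hx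

lemma nonnegOn_span_singleton {x : Fin N → ℂ} (hx : 0 ≤ (Jform J x x).re) :
    NonnegOn J (ℂ ∙ x) := by
  rintro _ hy
  obtain ⟨c, rfl⟩ := mem_span_singleton.mp hy
  rw [re_Jform_smul_self]
  exact mul_nonneg (Complex.normSq_nonneg c) hx

lemma NegDefOn.sup (hJ : J.IsHermitian) (h : NegDefOn J W) (h' : NegDefOn J W')
    (hW : W' ≤ Jorth J W) : NegDefOn J (W ⊔ W') := by
  intro z hz hz0
  obtain ⟨x, hx, y, hy, rfl⟩ := mem_sup.mp hz
  rw [Jform_add_self_of_mem_Jorth hJ hx (hW hy), Complex.add_re]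
  rcases eq_or_ne x 0 with rfl | hx0
  · simpa [Jform_zero_left] using h' y hy (by simpa using hz0)
  · linarith [h x hx hx0, h'.re_nonpos hy]

lemma NonnegOn.sup (hJ : J.IsHermitian) (h : NonnegOn J W) (h' : NonnegOn J W')
    (hW : W' ≤ Jorth J W) : NonnegOn J (W ⊔ W') := by
  intro z hz
  obtain ⟨x, hx, y, hy, rfl⟩ := mem_sup.mp hz
  rw [Jform_add_self_of_mem_Jorth hJ hx (hW hy), Complex.add_re]
  linarith [h x hx, h' y hy]

lemma le_negSquares (hWL : W ≤ L) (hW : NegDefOn J W) : finrank ℂ W ≤ negSquares J L := by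
  refine le_csSup ⟨N, ?_⟩ ⟨W, hWL, rfl, hW⟩
  rintro _ ⟨W, -, rfl, -⟩
  simpa using W.finrank_le

lemma negSquares_le {n : ℕ} (h : ∀ W ≤ L, NegDefOn J W → finrank ℂ W ≤ n) :
    negSquares J L ≤ n :=
  csSup_le ⟨0, ⊥, bot_le, finrank_bot ℂ _, negDefOn_bot⟩ fun _ ⟨W, hWL, hd, hW⟩ => hd ▸ h W hWL hW

lemma negSquares_sup_eq_finrank (hn : NegDefOn J W) (hp : NonnegOn J W') :
    negSquares J (W ⊔ W') = finrank ℂ W := by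
  refine le_antisymm (negSquares_le fun U hU hUn => ?_) (le_negSquares le_sup_left hn)
  have hsum := finrank_sup_add_finrank_inf_eq W W'
  have hUsum := finrank_sup_add_finrank_inf_eq U W'
  rw [(hn.disjoint_of_nonnegOn hp).eq_bot, finrank_bot] at hsum
  rw [(hUn.disjoint_of_nonnegOn hp).eq_bot, finrank_bot] at hUsum
  have := finrank_mono (sup_le hU (le_sup_right : W' ≤ W ⊔ W'))
  omega

lemma span_singleton_sup_inf_Jorth {M : Submodule ℂ (Fin N → ℂ)} {x : Fin N → ℂ} (hx : x ∈ M)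
    (hxx : Jform J x x ≠ 0) : (ℂ ∙ x) ⊔ (M ⊓ Jorth J (ℂ ∙ x)) = M := by
  refine le_antisymm (sup_le ((span_singleton_le_iff_mem x M).mpr hx) inf_le_left) fun m hm => ?_
  set c := Jform J x m / Jform J x x
  have hproj : m - c • x ∈ M ⊓ Jorth J (ℂ ∙ x) := by
    refine ⟨M.sub_mem hm (M.smul_mem c hx), mem_Jorth_span_singleton.mpr ?_⟩
    rw [Jform_sub_right, Jform_smul_right, div_mul_cancel₀ _ hxx, sub_self]
  simpa using add_mem_sup (mem_span_singleton.mpr ⟨c, rfl⟩ : c • x ∈ ℂ ∙ x) hproj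

theorem exists_negDefOn_sup_nonnegOn (hJ : J.IsHermitian) (M : Submodule ℂ (Fin N → ℂ)) :
    ∃ W W', NegDefOn J W ∧ NonnegOn J W' ∧ W ⊔ W' = M := by
  induction hM : finrank ℂ M using Nat.strong_induction_on generalizing M with
  | _ n ih =>
  by_cases hnonneg : NonnegOn J M
  · exact ⟨⊥, M, negDefOn_bot, hnonneg, bot_sup_eq M⟩
  obtain ⟨x, hxM, hx⟩ : ∃ x ∈ M, (Jform J x x).re < 0 := by
    simpa [NonnegOn] using hnonneg
  have hxx : Jform J x x ≠ 0 := fun h => by simp [h] at hx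
  set M' := M ⊓ Jorth J (ℂ ∙ x)
  have hlt : finrank ℂ M' < n := by
    refine hM ▸ finrank_lt_finrank_of_lt (lt_of_le_of_ne inf_le_left fun h => hxx ?_)
    exact mem_Jorth_span_singleton.mp (h ▸ hxM : x ∈ M').2
  obtain ⟨W, W', hW, hW', hsup⟩ := ih _ hlt M' rfl
  refine ⟨(ℂ ∙ x) ⊔ W, W', (negDefOn_span_singleton hx).sup hJ hW ?_, hW', ?_⟩
  · exact (le_sup_left.trans hsup.le).trans inf_le_right
  · rw [sup_assoc, hsup, span_singleton_sup_inf_Jorth hxM hxx]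

theorem negSquares_sup_of_le_Jorth (hJ : J.IsHermitian) (hL : L' ≤ Jorth J L) :
    negSquares J (L ⊔ L') = negSquares J L + negSquares J L' := by
  obtain ⟨W₁, W₁', hW₁, hW₁', rfl⟩ := exists_negDefOn_sup_nonnegOn hJ L
  obtain ⟨W₂, W₂', hW₂, hW₂', rfl⟩ := exists_negDefOn_sup_nonnegOn hJ L'
  have horth : W₂ ≤ Jorth J W₁ := le_sup_left.trans (hL.trans (Jorth_anti le_sup_left))
  have horth' : W₂' ≤ Jorth J W₁' := le_sup_right.trans (hL.trans (Jorth_anti le_sup_right))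
  have hdisj : Disjoint W₁ W₂ := by
    rw [disjoint_def]
    intro x hx₁ hx₂
    by_contra hx0
    exact (hW₁ x hx₁ hx0).ne (by rw [horth hx₂ x hx₁, Complex.zero_re])
  have hrank := finrank_sup_add_finrank_inf_eq W₁ W₂
  rw [hdisj.eq_bot, finrank_bot, add_zero] at hrank
  rw [sup_sup_sup_comm, negSquares_sup_eq_finrank (hW₁.sup hJ hW₂ horth) (hW₁'.sup hJ hW₂' horth'),
    negSquares_sup_eq_finrank hW₁ hW₁', negSquares_sup_eq_finrank hW₂ hW₂', hrank]

lemma negSquares_bot : negSquares J ⊥ = 0 :=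
  Nat.eq_zero_of_le_zero <| negSquares_le fun W hW _ => by rw [le_bot_iff.mp hW, finrank_bot]

lemma negSquares_span_singleton {v : Fin N → ℂ} (hv : v ≠ 0) :
    negSquares J (ℂ ∙ v) = if (Jform J v v).re < 0 then 1 else 0 := by
  split_ifs with h
  · have hnonneg : NonnegOn J ⊥ := fun x hx => by simp [(mem_bot ℂ).mp hx, Jform_zero_left]
    rw [← sup_bot_eq (ℂ ∙ v), negSquares_sup_eq_finrank (negDefOn_span_singleton h) hnonneg,
      finrank_span_singleton hv]
  · rw [← bot_sup_eq (ℂ ∙ v), negSquares_sup_eq_finrank negDefOn_bot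
      (nonnegOn_span_singleton (not_lt.mp h)), finrank_bot]

open Finset in
theorem negSquares_span_image {ι : Type*} [DecidableEq ι] (hJ : J.IsHermitian)
    (v : ι → Fin N → ℂ) (hv : ∀ i, v i ≠ 0)
    (horth : Pairwise fun i j => Jform J (v i) (v j) = 0) (s : Finset ι) :
    negSquares J (span ℂ (v '' s)) = #{i ∈ s | (Jform J (v i) (v i)).re < 0} := by
  induction s using Finset.induction_on with
  | empty => simp [negSquares_bot]
  | insert a s ha ih =>
    have horth_a : span ℂ (v '' s) ≤ Jorth J (ℂ ∙ v a) := by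
      rw [span_le]
      rintro _ ⟨i, hi, rfl⟩
      exact mem_Jorth_span_singleton.mpr (horth (ne_of_mem_of_not_mem hi ha).symm)
    rw [coe_insert, Set.image_insert_eq, span_insert, negSquares_sup_of_le_Jorth hJ horth_a, ih,
      negSquares_span_singleton (hv a), filter_insert]
    split_ifs
    · rw [card_insert_of_notMem (fun h => ha (mem_filter.mp h).1), add_comm]
    · rw [zero_add]

section Eigenvectors

variable (hJ : J.IsHermitian)

lemma Jform_eigenvectorBasis (i j : Fin N) :
    Jform J (hJ.eigenvectorBasis i) (hJ.eigenvectorBasis j) =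
      if i = j then (hJ.eigenvalues i : ℂ) else 0 := by
  rw [Jform, hJ.mulVec_eigenvectorBasis, star_smul, smul_dotProduct, dotProduct_comm,
    ← EuclideanSpace.inner_eq_star_dotProduct,
    orthonormal_iff_ite.mp hJ.eigenvectorBasis.orthonormal]
  split_ifs <;> simp

lemma span_range_eigenvectorBasis : span ℂ (Set.range fun i => ⇑(hJ.eigenvectorBasis i)) = ⊤ :=
  (hJ.eigenvectorBasis.toBasis.map (WithLp.linearEquiv 2 ℂ (Fin N → ℂ))).span_eq

open Finset in
theorem negSquares_top : negSquares J ⊤ = #{i | hJ.eigenvalues i < 0} := by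
  have h := negSquares_span_image hJ (fun i => ⇑(hJ.eigenvectorBasis i))
    (fun i => by simpa using hJ.eigenvectorBasis.orthonormal.ne_zero i)
    (fun i j hij => by simp only [Jform_eigenvectorBasis, if_neg hij]) Finset.univ
  rw [Finset.coe_univ, Set.image_univ, span_range_eigenvectorBasis] at h
  simpa [Jform_eigenvectorBasis] using h

end Eigenvectors

lemma le_Jorth_comm (hJ : J.IsHermitian) : W ≤ Jorth J L ↔ L ≤ Jorth J W :=
  have key {L W : Submodule ℂ (Fin N → ℂ)} (h : W ≤ Jorth J L) : L ≤ Jorth J W :=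
    fun x hx y hy => by rw [Jform_swap hJ, h hy x hx, map_zero]
  ⟨key, key⟩

lemma Jform_mulVec_left (hA : J * A = Aᴴ * J) (x y : Fin N → ℂ) :
    Jform J (A *ᵥ x) y = Jform J x (A *ᵥ y) := by
  rw [Jform, Jform, mulVec_mulVec, hA, ← mulVec_mulVec, star_mulVec, conjTranspose_conjTranspose,
    ← dotProduct_mulVec]

lemma eigenspace_le_Jorth_eigenspace (hA : J * A = Aᴴ * J) {μ ν : ℝ} (hμν : μ ≠ ν) :
    eigenspace (toLin' A) μ ≤ Jorth J (eigenspace (toLin' A) ν) := by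
  intro x hx y hy
  rw [mem_eigenspace_iff, toLin'_apply] at hx hy
  have h : (ν : ℂ) * Jform J y x = μ * Jform J y x := by
    rw [← Complex.conj_ofReal ν, ← Jform_smul_left, ← hy, Jform_mulVec_left hA, hx,
      Jform_smul_right]
  have hne : (ν : ℂ) ≠ μ := by exact_mod_cast hμν.symm
  exact (mul_left_inj' (sub_ne_zero.mpr hne)).mp (by linear_combination h)

lemma iSup_eigenspace_toLin'_eq_top (hd : Diagonalizable A) :
    ⨆ μ, eigenspace (toLin' A) μ = ⊤ := by
  obtain ⟨P, D, hP, hD, rfl⟩ := hd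
  have hsurj : LinearMap.range P.mulVecLin = ⊤ := LinearMap.range_eq_top.mpr fun x =>
    ⟨P⁻¹ *ᵥ x, by rw [mulVecLin_apply, mulVec_mulVec, mul_nonsing_inv P hP, one_mulVec]⟩
  rw [eq_top_iff, ← hsurj, range_mulVecLin, span_le]
  rintro _ ⟨i, rfl⟩
  have hDe : D *ᵥ Pi.single i 1 = D i i • Pi.single i 1 := by
    conv_lhs => rw [← hD.diagonal_diag]
    rw [diagonal_mulVec_single, ← Pi.single_smul', smul_eq_mul]
    rfl
  refine mem_iSup_of_mem (D i i) ?_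
  rw [mem_eigenspace_iff, toLin'_apply, ← mulVec_single_one, mulVec_mulVec, mul_assoc, mul_assoc,
    nonsing_inv_mul P hP, mul_one, ← mulVec_mulVec, hDe, mulVec_smul]

lemma eigSpan_sup_Jorth_eq_top (hJ : J.IsHermitian)
    (hA : J * A = Aᴴ * J) (hd : Diagonalizable A) (hr : spectrum ℂ A ⊆ Set.range Complex.ofReal)
    (Δ : Set ℝ) : eigSpan A Δ ⊔ Jorth J (eigSpan A Δ) = ⊤ := by
  rw [eq_top_iff, ← iSup_eigenspace_toLin'_eq_top hd, iSup_le_iff]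
  intro μ
  by_cases hμ : eigenspace (toLin' A) μ = ⊥
  · simp [hμ]
  obtain ⟨t, rfl⟩ := hr (spectrum_toLin' A ▸ HasEigenvalue.mem_spectrum hμ)
  by_cases ht : t ∈ Δ
  · exact le_sup_of_le_left (le_iSup₂_of_le t ht le_rfl)
  · refine le_sup_of_le_right ((le_Jorth_comm hJ).mpr (iSup₂_le fun s hs => ?_))
    exact eigenspace_le_Jorth_eigenspace hA (ne_of_mem_of_not_mem hs ht)

theorem stmt16_general {N : ℕ} (J A : Matrix (Fin N) (Fin N) ℂ)
    (hJ : J.IsHermitian) (κ : ℕ)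
    (hκ : (Finset.univ.filter fun i => hJ.eigenvalues i < 0).card = κ)
    (hA : J * A = Aᴴ * J) (hd : Diagonalizable A)
    (hr : spectrum ℂ A ⊆ Set.range (Complex.ofReal))
    (Δ : Set ℝ) :
    negSquares J (eigSpan A Δ) ≤ κ ∧
      negSquares J (Jorth J (eigSpan A Δ)) = κ - negSquares J (eigSpan A Δ) := by
  have hsum := negSquares_sup_of_le_Jorth hJ (le_refl (Jorth J (eigSpan A Δ)))
  rw [eigSpan_sup_Jorth_eq_top hJ hA hd hr Δ, negSquares_top hJ, hκ] at hsum
  omega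

theorem stmt16 {N : ℕ} (J A : Matrix (Fin N) (Fin N) ℂ)
    (hJinv : IsUnit J.det) (hJ : J.IsHermitian) (κ : ℕ)
    (hκ : (Finset.univ.filter fun i => hJ.eigenvalues i < 0).card = κ)
    (hA : J * A = Aᴴ * J) (hd : Diagonalizable A)
    (hr : spectrum ℂ A ⊆ Set.range (Complex.ofReal))
    (Δ : Set ℝ) (hΔopen : IsOpen Δ) (hΔconn : Δ.OrdConnected) :
    negSquares J (eigSpan A Δ) ≤ κ ∧
      negSquares J (Jorth J (eigSpan A Δ)) = κ - negSquares J (eigSpan A Δ) :=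
  stmt16_general J A hJ κ hκ hA hd hr Δ
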